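/- The maximum prediction deviation is superadditive-compatible via a sorted-sum formula: max_{ỹ ∈ Bias_{l,Δ}(y)} (z·ỹ − z·y) equals the sum of the top-l entries of the vector ρ^+ (where ρ_i^+ = max(z_i δ_i^l, z_i δ_i^u) ≥ 0), and in particular this maximum is a concave, nondecreasing function of l: the marginal gain from increasing l to l+1 is the (l+1)-st largest ρ_i^+, which is nonincreasing in l. -/

import Mathlib

/-!
Each coordinate contributes independently: changing `y i` by `d ∈ [δl i, δu i]` moves the
prediction by `z i * d ≤ ρ i = max (z i * δl i) (z i * δu i)`, a linear function on an interval
being maximal at an endpoint, and `ρ i ≥ 0` because `0 ∈ [δl i, δu i]`. The largest deviation is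
therefore the largest sum of at most `l` of the `ρ i`, attained by the `l` largest ones, i.e. by
the first `l` entries of `ρ` sorted decreasingly. Monotonicity and the marginal gains are then
facts about prefix sums of a decreasing list of nonnegative numbers.
-/
open Matrix Set Finset

/-- The bias set: label vectors differing from `y` in at most `l` coordinates,
with per-coordinate difference in `[δl i, δu i]`. -/
def Bias {n : ℕ} (y δl δu : Fin n → ℝ) (l : ℕ) : Set (Fin n → ℝ) :=
  {y' | (∀ i, y' i - y i ∈ Set.Icc (δl i) (δu i)) ∧
        (Finset.univ.filter (fun i => y' i ≠ y i)).card ≤ l}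

/-- Dot product of two vectors in `ℝ^n`. -/
def dotR {n : ℕ} (z v : Fin n → ℝ) : ℝ := ∑ i, z i * v i

/-- Sum of the `l` largest entries of `ρ`. -/
noncomputable def topSum {n : ℕ} (ρ : Fin n → ℝ) (l : ℕ) : ℝ :=
  (((List.ofFn ρ).mergeSort (· ≥ ·)).take l).sum

namespace List

variable {α : Type*} [AddCommMonoid α] [PartialOrder α] [IsOrderedAddMonoid α]

theorem sum_le_sum_take_of_subperm {s t : List α} {l : ℕ} (hs : s.Pairwise (· ≥ ·))
    (hs₀ : ∀ x ∈ s, 0 ≤ x) (hts : t <+~ s) (htl : t.length ≤ l) :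
    t.sum ≤ (s.take l).sum := by
  classical
  induction s generalizing t l with
  | nil => simp_all
  | cons b s ih =>
    rcases t with _ | ⟨x, t⟩
    · exact sum_nonneg fun x hx => hs₀ x ((take_sublist l _).mem hx)
    obtain _ | l := l
    · simp at htl
    rw [pairwise_cons] at hs
    have hs₀' : ∀ x ∈ s, 0 ≤ x := fun x hx => hs₀ x (mem_cons_of_mem b hx)
    have herase : (x :: t).erase b <+~ s := by simpa using hts.erase b
    -- If `t` contains the head `b`, match it with `b`; otherwise `x ≤ b` takes its place.
    by_cases hb : b ∈ x :: t
    · rw [← sum_erase hb, take_succ_cons, sum_cons]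
      exact add_le_add le_rfl (ih hs.2 hs₀' herase (by rw [length_erase_of_mem hb]; omega))
    · rw [erase_of_not_mem hb] at herase
      rw [take_succ_cons, sum_cons, sum_cons]
      exact add_le_add (hs.1 x (herase.subset mem_cons_self))
        (ih hs.2 hs₀' ((sublist_cons_self x t).subperm.trans herase) (by simpa using htl))

theorem monotone_sum_take_of_nonneg {s : List α} (hs₀ : ∀ x ∈ s, 0 ≤ x) :
    Monotone fun l => (s.take l).sum :=
  fun _ _ hkl =>
    (take_sublist_take_left hkl).sum_le_sum fun x hx => hs₀ x ((take_sublist _ _).mem hx)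

end List

section topSum

variable {n : ℕ} (ρ : Fin n → ℝ)

theorem mergeSort_ofFn_perm_map_finRange :
    ((List.ofFn ρ).mergeSort (· ≥ ·)).Perm ((List.finRange n).map ρ) :=
  List.ofFn_eq_map ▸ List.mergeSort_perm _ _

theorem pairwise_mergeSort_ofFn : ((List.ofFn ρ).mergeSort (· ≥ ·)).Pairwise (· ≥ ·) :=
  List.pairwise_mergeSort' _ _

theorem topSum_succ {k : ℕ} (hk : k < n) :
    topSum ρ (k + 1) = topSum ρ k + ((List.ofFn ρ).mergeSort (· ≥ ·)).getD k 0 := by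
  have hk' : k < ((List.ofFn ρ).mergeSort (· ≥ ·)).length := by simpa using hk
  rw [topSum, topSum, List.sum_take_succ _ _ hk', List.getD_eq_getElem _ _ hk']

theorem getD_mergeSort_ofFn_succ_le {k : ℕ} (hk : k + 1 < n) :
    ((List.ofFn ρ).mergeSort (· ≥ ·)).getD (k + 1) 0 ≤
      ((List.ofFn ρ).mergeSort (· ≥ ·)).getD k 0 := by
  have hk' : k + 1 < ((List.ofFn ρ).mergeSort (· ≥ ·)).length := by simpa using hk
  rw [List.getD_eq_getElem _ _ hk', List.getD_eq_getElem _ _ (by omega)]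
  exact List.pairwise_iff_getElem.mp (pairwise_mergeSort_ofFn ρ) k (k + 1) _ hk' k.lt_succ_self

variable {ρ}

theorem nonneg_of_mem_mergeSort_ofFn (hρ : ∀ i, 0 ≤ ρ i) :
    ∀ x ∈ (List.ofFn ρ).mergeSort (· ≥ ·), 0 ≤ x := by
  intro x hx
  obtain ⟨i, rfl⟩ := List.mem_ofFn.mp ((List.mergeSort_perm _ _).mem_iff.mp hx)
  exact hρ i

theorem monotone_topSum (hρ : ∀ i, 0 ≤ ρ i) : Monotone (topSum ρ) :=
  List.monotone_sum_take_of_nonneg (nonneg_of_mem_mergeSort_ofFn hρ)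

theorem sum_le_topSum (hρ : ∀ i, 0 ≤ ρ i) {T : Finset (Fin n)} {l : ℕ} (hT : T.card ≤ l) :
    ∑ i ∈ T, ρ i ≤ topSum ρ l := by
  rw [← Finset.sum_map_toList]
  refine List.sum_le_sum_take_of_subperm (pairwise_mergeSort_ofFn ρ)
    (nonneg_of_mem_mergeSort_ofFn hρ) ?_ (by simpa using hT)
  obtain ⟨_, hperm, hsl⟩ := T.nodup_toList.subperm fun i _ => List.mem_finRange i
  exact List.Subperm.trans ⟨_, hperm.map ρ, hsl.map ρ⟩
    (mergeSort_ofFn_perm_map_finRange ρ).symm.subperm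

theorem exists_card_eq_sum_eq_topSum {l : ℕ} (hl : l ≤ n) :
    ∃ S : Finset (Fin n), S.card = l ∧ ∑ i ∈ S, ρ i = topSum ρ l := by
  have hsub : (((List.ofFn ρ).mergeSort (· ≥ ·)).take l).Subperm ((List.finRange n).map ρ) :=
    (List.take_sublist _ _).subperm.trans (mergeSort_ofFn_perm_map_finRange ρ).subperm
  obtain ⟨_, hperm, hsl⟩ := hsub
  obtain ⟨is, his, rfl⟩ := List.sublist_map_iff.mp hsl
  have hnodup : is.Nodup := his.nodup (List.nodup_finRange n)
  refine ⟨is.toFinset, ?_, ?_⟩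
  · rw [List.toFinset_card_of_nodup hnodup, ← List.length_map (f := ρ), hperm.length_eq]
    simp [hl]
  · rw [topSum, ← hperm.sum_eq, List.sum_toFinset _ hnodup]

end topSum

theorem mul_le_max_mul_of_mem_Icc {α : Type*} [Ring α] [LinearOrder α] [IsStrictOrderedRing α]
    (z : α) {a b d : α} (hd : d ∈ Icc a b) : z * d ≤ max (z * a) (z * b) := by
  rcases le_total 0 z with hz | hz
  · exact le_max_of_le_right (mul_le_mul_of_nonneg_left hd.2 hz)
  · exact le_max_of_le_left (mul_le_mul_of_nonpos_left hd.1 hz)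

section Bias

variable {n : ℕ} {z y δl δu : Fin n → ℝ}

theorem dotR_sub_le_sum_max {y' : Fin n → ℝ} (hy' : ∀ i, y' i - y i ∈ Icc (δl i) (δu i)) :
    dotR z y' - dotR z y ≤ ∑ i with y' i ≠ y i, max (z i * δl i) (z i * δu i) := by
  calc dotR z y' - dotR z y = ∑ i with y' i ≠ y i, z i * (y' i - y i) := by
        rw [dotR, dotR, ← sum_sub_distrib, sum_filter_of_ne fun i _ h => ?_]
        · simp_rw [mul_sub]
        · intro hy; simp [hy] at h
    _ ≤ _ := sum_le_sum fun i _ => mul_le_max_mul_of_mem_Icc (z i) (hy' i)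

theorem exists_mem_Bias_dotR_sub_eq (hl : ∀ i, δl i ≤ 0) (hu : ∀ i, 0 ≤ δu i) {l : ℕ}
    {S : Finset (Fin n)} (hS : S.card ≤ l) :
    ∃ y' ∈ Bias y δl δu l,
      dotR z y' - dotR z y = ∑ i ∈ S, max (z i * δl i) (z i * δu i) := by
  set e : Fin n → ℝ := fun i => if z i * δl i ≤ z i * δu i then δu i else δl i
  have he (i : Fin n) : e i ∈ Icc (δl i) (δu i) := by
    by_cases h : z i * δl i ≤ z i * δu i <;> simp [e, h, (hl i).trans (hu i)]
  refine ⟨fun i => y i + if i ∈ S then e i else 0, ⟨fun i => ?_, ?_⟩, ?_⟩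
  · by_cases hi : i ∈ S <;> simp [hi, he i, hl i, hu i]
  · refine (card_le_card fun i => ?_).trans hS
    by_cases hi : i ∈ S <;> simp [hi]
  · simp only [dotR, ← sum_sub_distrib, mul_add, add_sub_cancel_left, mul_ite, mul_zero,
      sum_ite_mem]
    exact sum_congr (univ_inter S) fun i _ => by simp only [e, mul_ite, max_def]

end Bias

/-- The maximal prediction deviation equals the sum of the top-`l` entries of
`ρ⁺`, it is nondecreasing in `l`, the marginal gain from `l` to `l+1` is the
`(l+1)`-st largest entry, and these marginal gains are nonincreasing. -/
theorem stmt16 {n : ℕ} (z y δl δu : Fin n → ℝ)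
    (hl : ∀ i, δl i ≤ 0) (hu : ∀ i, 0 ≤ δu i) :
    let ρ : Fin n → ℝ := fun i => max (z i * δl i) (z i * δu i)
    let sorted : List ℝ := (List.ofFn ρ).mergeSort (· ≥ ·)
    (∀ l : ℕ, l ≤ n →
      IsGreatest ((fun y' => dotR z y' - dotR z y) '' Bias y δl δu l)
        (topSum ρ l)) ∧
    Monotone (topSum ρ) ∧
    (∀ k : ℕ, k < n → topSum ρ (k + 1) = topSum ρ k + sorted.getD k 0) ∧
    (∀ k : ℕ, k + 1 < n → sorted.getD (k + 1) 0 ≤ sorted.getD k 0) := by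
  intro ρ sorted
  have hρ (i : Fin n) : 0 ≤ ρ i :=
    (mul_zero (z i)).symm.trans_le (mul_le_max_mul_of_mem_Icc (z i) ⟨hl i, hu i⟩)
  refine ⟨fun l hln => ⟨?_, ?_⟩, monotone_topSum hρ, fun k => topSum_succ ρ,
    fun k => getD_mergeSort_ofFn_succ_le ρ⟩
  · obtain ⟨S, hS, hsum⟩ := exists_card_eq_sum_eq_topSum (ρ := ρ) hln
    obtain ⟨y', hy', hdev⟩ := exists_mem_Bias_dotR_sub_eq (z := z) (y := y) hl hu hS.le
    exact ⟨y', hy', hdev.trans hsum⟩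
  · rintro _ ⟨y', hy', rfl⟩
    exact (dotR_sub_le_sum_max hy'.1).trans (sum_le_topSum hρ hy'.2)
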